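/- arXiv:1210.6498 — 5 statements merged into one kernel-verified Lean document; each statement's English description precedes it below -/
import Mathlib

section
/- Given invertible elements satisfying the B-type conjugation relations L* = −D L D⁻¹, L̂* = −D L̂ D⁻¹, M* = D L⁻¹ M L D⁻¹, and M̂* = D L̂ M̂ L̂⁻¹ D⁻¹, the operator B_{m,l} = M L^{m+1} L̂^{−l} + (−1)^{l+m} L̂^{−l} L^m M L satisfies the B-type condition B_{m,l}* = −D B_{m,l} D⁻¹ for all natural numbers m, l. -/
/-- Under the B type conjugation relations `L* = −DLD⁻¹`, `L̂* = −DL̂D⁻¹`,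
`M* = DL⁻¹MLD⁻¹`, `M̂* = DL̂M̂L̂⁻¹D⁻¹`, the operator
`B_{m,l} = M L^{m+1} L̂^{−l} + (−1)^{l+m} L̂^{−l} L^m M L` satisfies the B type condition
`B_{m,l}* = −D B_{m,l} D⁻¹`. -/
theorem Btype_Bml {A : Type*} [Ring A]
    (σ : A → A) (hσadd : ∀ a b : A, σ (a + b) = σ a + σ b)
    (hσmul : ∀ a b : A, σ (a * b) = σ b * σ a) (hσone : σ 1 = 1)
    (hσbij : Function.Bijective σ)
    (D L Lh : Aˣ) (M Mh : A)
    (hL : σ (L : A) = -((D : A) * (L : A) * (D⁻¹ : Aˣ)))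
    (hLh : σ (Lh : A) = -((D : A) * (Lh : A) * (D⁻¹ : Aˣ)))
    (hM : σ M = (D : A) * (L⁻¹ : Aˣ) * M * (L : A) * (D⁻¹ : Aˣ))
    (hMh : σ Mh = (D : A) * (Lh : A) * Mh * (Lh⁻¹ : Aˣ) * (D⁻¹ : Aˣ))
    (m l : ℕ) :
    σ (M * (L : A) ^ (m + 1) * (Lh⁻¹ : Aˣ) ^ l +
        (-1 : A) ^ (l + m) * ((Lh⁻¹ : Aˣ) ^ l * (L : A) ^ m * M * (L : A))) =
      -((D : A) *
        (M * (L : A) ^ (m + 1) * (Lh⁻¹ : Aˣ) ^ l +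
          (-1 : A) ^ (l + m) * ((Lh⁻¹ : Aˣ) ^ l * (L : A) ^ m * M * (L : A))) *
        (D⁻¹ : Aˣ)) := by
  have h0 : σ 0 = 0 := by have := hσadd 0 0; simpa using this.symm
  have hneg : ∀ a : A, σ (-a) = -σ a := by
    intro a
    have h := hσadd a (-a)
    simp [h0] at h
    exact (neg_eq_of_add_eq_zero_right h.symm).symm
  have hσpow : ∀ (a : A) (k : ℕ), σ (a ^ k) = (σ a) ^ k := by
    intro a k
    induction k with
    | zero => simpa using hσone
    | succ n ih => rw [pow_succ, hσmul, ih, ← pow_succ']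
  have hLhinv : σ ((Lh⁻¹ : Aˣ) : A) = -((D : A) * ((Lh⁻¹ : Aˣ) : A) * ((D⁻¹ : Aˣ) : A)) := by
    have h1 : σ ((Lh⁻¹ : Aˣ) : A) * σ (Lh : A) = 1 := by
      rw [← hσmul]; simp [hσone]
    have h2 : σ (Lh : A) * (-((D : A) * ((Lh⁻¹ : Aˣ) : A) * ((D⁻¹ : Aˣ) : A))) = 1 := by
      rw [hLh]
      simp [mul_assoc, Units.mul_inv_cancel_left, Units.inv_mul_cancel_left]
    have h3 := congrArg (· * (-((D : A) * ((Lh⁻¹ : Aˣ) : A) * ((D⁻¹ : Aˣ) : A)))) h1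
    simp only [mul_assoc] at h2 h3 ⊢
    rw [h2, mul_one, one_mul] at h3
    exact h3
  have hσL : ∀ k : ℕ, σ ((L : A) ^ k) = (-1 : A) ^ k * ((D : A) * (L : A) ^ k * ((D⁻¹ : Aˣ) : A)) := by
    intro k; rw [hσpow, hL, neg_pow, Units.conj_pow]
  have hσLi : ∀ k : ℕ, σ (((Lh⁻¹ : Aˣ) : A) ^ k) = (-1 : A) ^ k * ((D : A) * ((Lh⁻¹ : Aˣ) : A) ^ k * ((D⁻¹ : Aˣ) : A)) := by
    intro k; rw [hσpow, hLhinv, neg_pow, Units.conj_pow]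
  have hσS : σ ((-1 : A) ^ (l + m)) = (-1 : A) ^ (l + m) := by
    rw [hσpow]
    congr 1
    rw [show (-1 : A) = -(1 : A) from rfl, hneg, hσone]
  have keyA : σ (M * (L : A) ^ (m + 1) * ((Lh⁻¹ : Aˣ) : A) ^ l) =
      -((-1 : A) ^ (l + m) *
        ((D : A) * (((Lh⁻¹ : Aˣ) : A) ^ l * (L : A) ^ m * M * (L : A)) * ((D⁻¹ : Aˣ) : A))) := by
    rw [hσmul, hσmul, hσLi, hσL, hM]
    rcases Nat.even_or_odd l with hl | hl <;> rcases Nat.even_or_odd m with hm | hm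
    · have e1 : (-1 : A) ^ l = 1 := hl.neg_one_pow
      have e2 : (-1 : A) ^ (m + 1) = -1 := (hm.add_one).neg_one_pow
      have e3 : (-1 : A) ^ (l + m) = 1 := (hl.add hm).neg_one_pow
      simp [e1, e2, e3, mul_assoc, pow_succ, Units.inv_mul_cancel_left, Units.mul_inv_cancel_left]
    · have e1 : (-1 : A) ^ l = 1 := hl.neg_one_pow
      have e2 : (-1 : A) ^ (m + 1) = 1 := (hm.add_one).neg_one_pow
      have e3 : (-1 : A) ^ (l + m) = -1 := (hl.add_odd hm).neg_one_pow
      simp [e1, e2, e3, mul_assoc, pow_succ, Units.inv_mul_cancel_left, Units.mul_inv_cancel_left]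
    · have e1 : (-1 : A) ^ l = -1 := hl.neg_one_pow
      have e2 : (-1 : A) ^ (m + 1) = -1 := (hm.add_one).neg_one_pow
      have e3 : (-1 : A) ^ (l + m) = -1 := (hl.add_even hm).neg_one_pow
      simp [e1, e2, e3, mul_assoc, pow_succ, Units.inv_mul_cancel_left, Units.mul_inv_cancel_left]
    · have e1 : (-1 : A) ^ l = -1 := hl.neg_one_pow
      have e2 : (-1 : A) ^ (m + 1) = 1 := (hm.add_one).neg_one_pow
      have e3 : (-1 : A) ^ (l + m) = 1 := (hl.add_odd hm).neg_one_pow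
      simp [e1, e2, e3, mul_assoc, pow_succ, Units.inv_mul_cancel_left, Units.mul_inv_cancel_left]
  have keyB : σ (((Lh⁻¹ : Aˣ) : A) ^ l * (L : A) ^ m * M * (L : A)) =
      -((-1 : A) ^ (l + m) *
        ((D : A) * (M * (L : A) ^ (m + 1) * ((Lh⁻¹ : Aˣ) : A) ^ l) * ((D⁻¹ : Aˣ) : A))) := by
    rw [hσmul, hσmul, hσmul, hσLi, hσL, hM, hL]
    have hcomm : ∀ x : A, (L : A) * ((L : A) ^ m * x) = (L : A) ^ m * ((L : A) * x) := by
      intro x; rw [← mul_assoc, ← mul_assoc, pow_mul_comm']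
    rcases Nat.even_or_odd l with hl | hl <;> rcases Nat.even_or_odd m with hm | hm
    · have e1 : (-1 : A) ^ l = 1 := hl.neg_one_pow
      have e2 : (-1 : A) ^ m = 1 := hm.neg_one_pow
      have e3 : (-1 : A) ^ (l + m) = 1 := (hl.add hm).neg_one_pow
      simp [e1, e2, e3, mul_assoc, pow_succ, Units.inv_mul_cancel_left, Units.mul_inv_cancel_left, hcomm]
    · have e1 : (-1 : A) ^ l = 1 := hl.neg_one_pow
      have e2 : (-1 : A) ^ m = -1 := hm.neg_one_pow
      have e3 : (-1 : A) ^ (l + m) = -1 := (hl.add_odd hm).neg_one_pow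
      simp [e1, e2, e3, mul_assoc, pow_succ, Units.inv_mul_cancel_left, Units.mul_inv_cancel_left, hcomm]
    · have e1 : (-1 : A) ^ l = -1 := hl.neg_one_pow
      have e2 : (-1 : A) ^ m = 1 := hm.neg_one_pow
      have e3 : (-1 : A) ^ (l + m) = -1 := (hl.add_even hm).neg_one_pow
      simp [e1, e2, e3, mul_assoc, pow_succ, Units.inv_mul_cancel_left, Units.mul_inv_cancel_left, hcomm]
    · have e1 : (-1 : A) ^ l = -1 := hl.neg_one_pow
      have e2 : (-1 : A) ^ m = -1 := hm.neg_one_pow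
      have e3 : (-1 : A) ^ (l + m) = 1 := (hl.add_odd hm).neg_one_pow
      simp [e1, e2, e3, mul_assoc, pow_succ, Units.inv_mul_cancel_left, Units.mul_inv_cancel_left, hcomm]
  rw [hσadd, keyA, hσmul, hσS, keyB]
  rcases Nat.even_or_odd (l + m) with h | h
  · rw [h.neg_one_pow]; noncomm_ring
  · rw [h.neg_one_pow]; noncomm_ring
end

section
/- Under the same conjugation relations, the operator B̂_{m,l} = L^m L̂^{−l+1} M̂ + (−1)^{l+m} L̂ M̂ L̂^{−l} L^m satisfies the B-type condition B̂_{m,l}* = −D B̂_{m,l} D⁻¹ for all natural numbers m, l. -/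
/-- Under the B type conjugation relations, the operator
`B̂_{m,l} = L^m L̂^{1−l} M̂ + (−1)^{l+m} L̂ M̂ L̂^{−l} L^m` satisfies the B type condition
`B̂_{m,l}* = −D B̂_{m,l} D⁻¹`. Here `L̂^{1−l}` denotes the `(1 − l : ℤ)`-th power of the
invertible element `L̂`. -/
theorem Btype_Bml_hat {A : Type*} [Ring A]
    (σ : A → A) (hσadd : ∀ a b : A, σ (a + b) = σ a + σ b)
    (hσmul : ∀ a b : A, σ (a * b) = σ b * σ a) (hσone : σ 1 = 1)
    (hσbij : Function.Bijective σ)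
    (D L Lh : Aˣ) (M Mh : A)
    (hL : σ (L : A) = -((D : A) * (L : A) * (D⁻¹ : Aˣ)))
    (hLh : σ (Lh : A) = -((D : A) * (Lh : A) * (D⁻¹ : Aˣ)))
    (hM : σ M = (D : A) * (L⁻¹ : Aˣ) * M * (L : A) * (D⁻¹ : Aˣ))
    (hMh : σ Mh = (D : A) * (Lh : A) * Mh * (Lh⁻¹ : Aˣ) * (D⁻¹ : Aˣ))
    (m l : ℕ) :
    σ ((L : A) ^ m * ((Lh ^ (1 - (l : ℤ)) : Aˣ) : A) * Mh +
        (-1 : A) ^ (l + m) * ((Lh : A) * Mh * (Lh⁻¹ : Aˣ) ^ l * (L : A) ^ m)) =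
      -((D : A) *
        ((L : A) ^ m * ((Lh ^ (1 - (l : ℤ)) : Aˣ) : A) * Mh +
          (-1 : A) ^ (l + m) * ((Lh : A) * Mh * (Lh⁻¹ : Aˣ) ^ l * (L : A) ^ m)) *
        (D⁻¹ : Aˣ)) := by
  set d : A := (D : A) with hd
  set e : A := ((D⁻¹ : Aˣ) : A) with he
  set x : A := (L : A) with hx
  set h : A := (Lh : A) with hh
  set h' : A := ((Lh⁻¹ : Aˣ) : A) with hh'
  have hde : d * e = 1 := Units.mul_inv D
  have hed : e * d = 1 := Units.inv_mul D
  have hhh' : h * h' = 1 := Units.mul_inv Lh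
  have hh'h : h' * h = 1 := Units.inv_mul Lh
  -- basic facts about σ
  have hσ0 : σ 0 = 0 := by
    have h0 := hσadd 0 0
    rw [add_zero] at h0
    exact (left_eq_add.mp h0)
  have hσneg : ∀ a : A, σ (-a) = -σ a := by
    intro a
    have h0 := hσadd a (-a)
    rw [add_neg_cancel, hσ0] at h0
    exact eq_neg_of_add_eq_zero_right h0.symm
  have hσsgn : ∀ k : ℕ, σ ((-1 : A) ^ k) = (-1 : A) ^ k := by
    intro k
    induction k with
    | zero => simpa using hσone
    | succ n ih =>
      rw [pow_succ, hσmul, ih, hσneg, hσone]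
      exact (Commute.neg_one_left ((-1 : A) ^ n)).eq
  -- sign commutes with everything
  have hsgnc : ∀ (a : A) (k : ℕ), a * (-1 : A) ^ k = (-1 : A) ^ k * a := by
    intro a k
    exact ((Commute.neg_one_right a).pow_right k).eq
  have hsq : ((-1 : A) ^ (l + m)) * ((-1 : A) ^ (l + m)) = 1 := by
    rw [← pow_add]
    exact Even.neg_one_pow ⟨l + m, rfl⟩
  -- conjugation multiplication
  have key : ∀ a b : A, (d * a * e) * (d * b * e) = d * (a * b) * e := by
    intro a b
    have hed' : ∀ z : A, e * (d * z) = z := by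
      intro z; rw [← mul_assoc, hed, one_mul]
    simp only [mul_assoc, hed']
  -- composition lemma
  have step : ∀ (a b c f : A) (j k : ℕ),
      σ a = (-1 : A) ^ j * (d * c * e) → σ b = (-1 : A) ^ k * (d * f * e) →
      σ (b * a) = (-1 : A) ^ (j + k) * (d * (c * f) * e) := by
    intro a b c f j k ha hb
    rw [hσmul, ha, hb, mul_assoc, ← mul_assoc (d * c * e), hsgnc (d * c * e) k,
      mul_assoc ((-1 : A) ^ k), key, ← mul_assoc, ← pow_add]
  -- σ of powers of x
  have sx : σ x = -(d * x * e) := hL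
  have sxpow : ∀ n : ℕ, σ (x ^ n) = (-1 : A) ^ n * (d * x ^ n * e) := by
    intro n
    induction n with
    | zero => simp [hσone, hde]
    | succ n ih =>
      rw [pow_succ', hσmul, ih, sx, mul_neg, mul_assoc ((-1 : A) ^ n), key, ← pow_succ,
        pow_succ (-1 : A) n, mul_neg_one, neg_mul, ← pow_succ']
  -- σ of h' and its powers
  have sh : σ h = -(d * h * e) := hLh
  have sh' : σ h' = -(d * h' * e) := by
    have h2 : σ h' * σ h = 1 := by rw [← hσmul, hhh', hσone]
    have hcand : σ h * -(d * h' * e) = 1 := by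
      rw [sh, neg_mul_neg, key, hhh', mul_one, hde]
    calc σ h' = σ h' * (σ h * -(d * h' * e)) := by rw [hcand, mul_one]
      _ = (σ h' * σ h) * -(d * h' * e) := (mul_assoc _ _ _).symm
      _ = -(d * h' * e) := by rw [h2, one_mul]
  have sh'pow : ∀ n : ℕ, σ (h' ^ n) = (-1 : A) ^ n * (d * h' ^ n * e) := by
    intro n
    induction n with
    | zero => simp [hσone, hde]
    | succ n ih =>
      rw [pow_succ', hσmul, ih, sh', mul_neg, mul_assoc ((-1 : A) ^ n), key, ← pow_succ,
        pow_succ (-1 : A) n, mul_neg_one, neg_mul, ← pow_succ']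
  -- commutation of h and powers of h'
  have hcomm : ∀ n : ℕ, h' ^ n * h = h * h' ^ n := by
    intro n
    induction n with
    | zero => simp
    | succ n ih =>
      rw [pow_succ', mul_assoc, ih, ← mul_assoc, hh'h, one_mul, ← mul_assoc, hhh',
        one_mul]
  -- cast of the zpow
  have hz : ((Lh ^ (1 - (l : ℤ)) : Aˣ) : A) = h * h' ^ l := by
    have hzz : (Lh ^ (1 - (l : ℤ)) : Aˣ) = Lh * (Lh⁻¹) ^ l := by
      rw [zpow_sub, zpow_one, zpow_natCast, inv_pow]
    rw [hzz, Units.val_mul, Units.val_pow_eq_pow_val]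
  rw [hz]
  set X : A := x ^ m * (h * h' ^ l) * Mh with hX
  set Y : A := h * Mh * h' ^ l * x ^ m with hY
  -- normalized σ values
  have sMh0 : σ Mh = (-1 : A) ^ 0 * (d * (h * Mh * h') * e) := by
    rw [hMh, pow_zero, one_mul]
    simp only [mul_assoc]
  have sh1 : σ h = (-1 : A) ^ 1 * (d * h * e) := by
    rw [sh, pow_one, neg_one_mul]
  -- build σ X
  have s1 := step _ _ _ _ _ _ (sh'pow l) sh1
  have s2 := step _ _ _ _ _ _ s1 (sxpow m)
  have sX0 := step _ _ _ _ _ _ sMh0 s2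
  have hY' : h * Mh * h' * (h' ^ l * h * x ^ m) = Y := by
    rw [hY, hcomm l]
    simp only [mul_assoc]
    rw [← mul_assoc h' h, hh'h, one_mul]
  have sX : σ X = -((-1 : A) ^ (l + m) * (d * Y * e)) := by
    rw [hX, sX0, hY', show (0 + (l + 1 + m)) = (l + m) + 1 from by omega, pow_succ,
      mul_neg_one, neg_mul]
  -- build σ Y
  have t1 := step _ _ _ _ _ _ sMh0 sh1
  have t2 := step _ _ _ _ _ _ (sh'pow l) t1
  have t3 := step _ _ _ _ _ _ (sxpow m) t2
  have hX'' : x ^ m * (h' ^ l * (h * Mh * h' * h)) = X := by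
    rw [hX]
    have hq : h * Mh * h' * h = h * Mh := by
      rw [mul_assoc (h * Mh), hh'h, mul_one]
    rw [hq, ← mul_assoc (h' ^ l) h Mh, hcomm, ← mul_assoc]
  have sY : σ Y = -((-1 : A) ^ (l + m) * (d * X * e)) := by
    rw [hY, t3, hX'', show (m + (l + (0 + 1))) = (l + m) + 1 from by omega, pow_succ,
      mul_neg_one, neg_mul]
  -- assemble
  have hterm2 : σ Y * (-1 : A) ^ (l + m) = -(d * X * e) := by
    rw [sY, neg_mul, mul_assoc, hsgnc (d * X * e) (l + m), ← mul_assoc, hsq, one_mul]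
  have hmove : d * ((-1 : A) ^ (l + m) * Y) * e = (-1 : A) ^ (l + m) * (d * Y * e) := by
    rw [← mul_assoc, hsgnc d (l + m)]
    simp only [mul_assoc]
  rw [hσadd, hσmul ((-1 : A) ^ (l + m)) Y, hσsgn (l + m), sX, hterm2, mul_add, add_mul, hmove, neg_add]
  exact add_comm _ _
end

section
/- Bracket identity for unmixed products: in an associative algebra decomposed as a direct sum of two subalgebras with projections ₊ and ₋, suppose U and Û are subalgebras that commute elementwise ([u, û] = 0 for u ∈ U, û ∈ Û). For f, g ∈ U and f̂, ĝ ∈ Û, define Y_A(gĝ) = [−A₋, g]ĝ + g[A₊, ĝ] and {A, B} = −Y_A B + Y_B A − [A₋, B₋] + [A₊, B₊]. Then {f f̂, g ĝ} = [f, g] f̂ ĝ − f g [f̂, ĝ]. -/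
/-- Bracket identity for unmixed products. With a triangular decomposition given by
projections `π₊, π₋`, commuting subrings `U, Û`, elements `f, g ∈ U`, `f̂, ĝ ∈ Û`,
`A = f f̂`, `B = g ĝ`, and the flows `Y_A(g ĝ) = [−A₋, g] ĝ + g [A₊, ĝ]`, one has
`{f f̂, g ĝ} = [f, g] f̂ ĝ − f g [f̂, ĝ]`, where
`{A, B} = −Y_A(B) + Y_B(A) − [A₋, B₋] + [A₊, B₊]`. -/
theorem bracket_unmixed_products {R : Type*} [Ring R]
    (πp πm : R →+ R)
    (hsum : ∀ a : R, πp a + πm a = a)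
    (hpp : ∀ a : R, πp (πp a) = πp a)
    (hpm : ∀ a : R, πp (πm a) = 0)
    (hmm : ∀ a : R, πm (πm a) = πm a)
    (hmp : ∀ a : R, πm (πp a) = 0)
    (hclosedp : ∀ a b : R, πp (πp a * πp b) = πp a * πp b)
    (hclosedm : ∀ a b : R, πm (πm a * πm b) = πm a * πm b)
    (U Uh : Subring R)
    (hcomm : ∀ u ∈ U, ∀ v ∈ Uh, u * v = v * u)
    (f g : R) (hf : f ∈ U) (hg : g ∈ U)
    (fh gh : R) (hfh : fh ∈ Uh) (hgh : gh ∈ Uh) :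
    -- `−Y_A(B) + Y_B(A) − [A₋, B₋] + [A₊, B₊]` with `A = f f̂`, `B = g ĝ`:
    -(((-(πm (f * fh))) * g - g * (-(πm (f * fh)))) * gh +
        g * (πp (f * fh) * gh - gh * πp (f * fh))) +
      (((-(πm (g * gh))) * f - f * (-(πm (g * gh)))) * fh +
        f * (πp (g * gh) * fh - fh * πp (g * gh))) -
      (πm (f * fh) * πm (g * gh) - πm (g * gh) * πm (f * fh)) +
      (πp (f * fh) * πp (g * gh) - πp (g * gh) * πp (f * fh)) =
    (f * g - g * f) * (fh * gh) - f * g * (fh * gh - gh * fh) := by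
  have e1 : πp (f * fh) = f * fh - πm (f * fh) := by
    have h := hsum (f * fh); rw [eq_sub_iff_add_eq]; exact h
  have e2 : πp (g * gh) = g * gh - πm (g * gh) := by
    have h := hsum (g * gh); rw [eq_sub_iff_add_eq]; exact h
  rw [e1, e2]
  noncomm_ring
end

section
/- Mixed bracket identity: with the same setup (two commuting subalgebras U, Û inside an algebra with triangular decomposition, and the flows Y_A acting by −A₋ on U-factors and by A₊ on Û-factors), for f, g ∈ U and f̂, ĝ ∈ Û one has {f f̂, ĝ g} = [f, ĝ][g, f̂] − f [f̂, ĝ] g + ĝ [f, g] f̂; in particular, since U and Û commute elementwise so that [f, ĝ] = [g, f̂] = 0, this simplifies to {f f̂, ĝ g} = −f[f̂, ĝ]g + ĝ[f, g]f̂. -/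
/-- Mixed bracket identity (Lemma 3.3, eq. (3.19)): with commuting subrings `U, Û` inside
a ring with triangular decomposition, `A = f f̂`, `B = ĝ g`,
`Y_A(f f̂) = [−A₋, f] f̂ + f [A₊, f̂]`, `Y_A(ĝ g) = [A₊, ĝ] g + ĝ [−A₋, g]`,
`{A, B} = −Y_A(B) + Y_B(A) − [A₋, B₋] + [A₊, B₊]`, one has
`{f f̂, ĝ g} = [f, ĝ][g, f̂] − f [f̂, ĝ] g + ĝ [f, g] f̂`; since `U` and `Û` commute
elementwise this simplifies to `−f [f̂, ĝ] g + ĝ [f, g] f̂`. -/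
theorem bracket_mixed_products {R : Type*} [Ring R]
    (πp πm : R →+ R)
    (hsum : ∀ a : R, πp a + πm a = a)
    (hpp : ∀ a : R, πp (πp a) = πp a)
    (hpm : ∀ a : R, πp (πm a) = 0)
    (hmm : ∀ a : R, πm (πm a) = πm a)
    (hmp : ∀ a : R, πm (πp a) = 0)
    (hclosedp : ∀ a b : R, πp (πp a * πp b) = πp a * πp b)
    (hclosedm : ∀ a b : R, πm (πm a * πm b) = πm a * πm b)
    (U Uh : Subring R)
    (hcomm : ∀ u ∈ U, ∀ v ∈ Uh, u * v = v * u)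
    (f g : R) (hf : f ∈ U) (hg : g ∈ U)
    (fh gh : R) (hfh : fh ∈ Uh) (hgh : gh ∈ Uh) :
    -- `{A, B} = −Y_A(B) + Y_B(A) − [A₋, B₋] + [A₊, B₊]` with `A = f f̂`, `B = ĝ g`:
    (-((πp (f * fh) * gh - gh * πp (f * fh)) * g +
        gh * ((-(πm (f * fh))) * g - g * (-(πm (f * fh))))) +
      (((-(πm (gh * g))) * f - f * (-(πm (gh * g)))) * fh +
        f * (πp (gh * g) * fh - fh * πp (gh * g))) -
      (πm (f * fh) * πm (gh * g) - πm (gh * g) * πm (f * fh)) +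
      (πp (f * fh) * πp (gh * g) - πp (gh * g) * πp (f * fh)) =
      (f * gh - gh * f) * (g * fh - fh * g) - f * (fh * gh - gh * fh) * g +
        gh * (f * g - g * f) * fh) ∧
    (-((πp (f * fh) * gh - gh * πp (f * fh)) * g +
        gh * ((-(πm (f * fh))) * g - g * (-(πm (f * fh))))) +
      (((-(πm (gh * g))) * f - f * (-(πm (gh * g)))) * fh +
        f * (πp (gh * g) * fh - fh * πp (gh * g))) -
      (πm (f * fh) * πm (gh * g) - πm (gh * g) * πm (f * fh)) +
      (πp (f * fh) * πp (gh * g) - πp (gh * g) * πp (f * fh)) =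
      -(f * (fh * gh - gh * fh) * g) + gh * (f * g - g * f) * fh) := by
  have c2 : f * gh = gh * f := hcomm f hf gh hgh
  have hm1 : πm (f * fh) = f * fh - πp (f * fh) := by
    rw [eq_sub_iff_add_eq, add_comm]; exact hsum _
  have hm2 : πm (gh * g) = gh * g - πp (gh * g) := by
    rw [eq_sub_iff_add_eq, add_comm]; exact hsum _
  have main :
      -((πp (f * fh) * gh - gh * πp (f * fh)) * g +
        gh * ((-(πm (f * fh))) * g - g * (-(πm (f * fh))))) +
      (((-(πm (gh * g))) * f - f * (-(πm (gh * g)))) * fh +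
        f * (πp (gh * g) * fh - fh * πp (gh * g))) -
      (πm (f * fh) * πm (gh * g) - πm (gh * g) * πm (f * fh)) +
      (πp (f * fh) * πp (gh * g) - πp (gh * g) * πp (f * fh)) =
      -(f * (fh * gh - gh * fh) * g) + gh * (f * g - g * f) * fh := by
    rw [hm1, hm2]
    have e1 : gh * (f * fh) * g = f * gh * fh * g := by
      rw [← mul_assoc gh f fh, ← c2]
    have e2 : f * (gh * g) * fh = gh * f * g * fh := by
      rw [← mul_assoc f gh g, c2]
    have key :
        -((πp (f * fh) * gh - gh * πp (f * fh)) * g +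
          gh * ((-(f * fh - πp (f * fh))) * g - g * (-(f * fh - πp (f * fh))))) +
        (((-(gh * g - πp (gh * g))) * f - f * (-(gh * g - πp (gh * g)))) * fh +
          f * (πp (gh * g) * fh - fh * πp (gh * g))) -
        ((f * fh - πp (f * fh)) * (gh * g - πp (gh * g)) -
          (gh * g - πp (gh * g)) * (f * fh - πp (f * fh))) +
        (πp (f * fh) * πp (gh * g) - πp (gh * g) * πp (f * fh)) =
        gh * (f * fh) * g + f * (gh * g) * fh - gh * g * (f * fh) - f * fh * (gh * g) := by
      noncomm_ring
    rw [key, e1, e2]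
    noncomm_ring
  refine ⟨?_, main⟩
  rw [main, show f * gh - gh * f = 0 by rw [c2, sub_self], zero_mul]
  noncomm_ring
end

section
/- D-type B-condition for the difference of Orlov–Schulman operators: let A be an associative ℚ-algebra with an anti-automorphism *, invertible elements D, L, L̂ and elements M, M̂ with L* = −DLD⁻¹, L̂* = −DL̂D⁻¹, M* = DL⁻¹MLD⁻¹, M̂* = DL̂M̂L̂⁻¹D⁻¹, [L, M] = 1, [L̂⁻¹, M̂] = 1, and suppose ℒ := L^{2n} = L̂² for some n ≥ 1. Define 𝓜 = (1/(2n)) M L^{1−2n} and 𝓜̂ = −(1/2) M̂ L̂^{−3}. Then ℒ*(𝓜 − 𝓜̂)* = −D ℒ(𝓜 − 𝓜̂) D⁻¹. -/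
set_option linter.unusedSectionVars false
set_option linter.unusedVariables false
set_option maxHeartbeats 1000000

section DtypeAux
variable {A : Type*} [Ring A] [Algebra ℚ A]

private lemma sig_sub (σ : A → A) (hσadd : ∀ a b : A, σ (a + b) = σ a + σ b)
    (hσsmul : ∀ (q : ℚ) (a : A), σ (q • a) = q • σ a) (a b : A) :
    σ (a - b) = σ a - σ b := by
  have h : σ (a + (-1 : ℚ) • b) = σ a + (-1:ℚ) • σ b := by rw [hσadd, hσsmul]
  simpa [neg_one_smul, sub_eq_add_neg] using h

private lemma sig_pow (σ : A → A)
    (hσmul : ∀ a b : A, σ (a * b) = σ b * σ a) (hσone : σ 1 = 1)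
    (D L : Aˣ)
    (hL : σ (L : A) = -((D : A) * (L : A) * ((D⁻¹ : Aˣ) : A))) :
    ∀ m : ℕ, σ ((L ^ m : Aˣ) : A)
      = ((-1 : ℤ) ^ m) • ((D : A) * ((L ^ m : Aˣ) : A) * ((D⁻¹ : Aˣ) : A)) := by
  intro m
  induction m with
  | zero => simpa using hσone
  | succ k ih =>
    have hv : ((L ^ (k+1) : Aˣ) : A) = ((L ^ k : Aˣ) : A) * (L : A) := by
      rw [pow_succ, Units.val_mul]
    have hcomm' : ∀ x : A, (L : A) * (((L^k : Aˣ) : A) * x) = ((L^k : Aˣ) : A) * ((L : A) * x) := by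
      intro x
      rw [← mul_assoc, ← Units.val_mul, ← pow_succ', pow_succ, Units.val_mul, mul_assoc]
    rw [hv, hσmul, ih, hL]
    rw [show ((-1:ℤ))^(k+1) = (-1:ℤ)^k * (-1) from pow_succ _ _]
    rw [mul_smul, neg_one_zsmul, mul_smul_comm]
    have hc2 : ∀ x : A, (L : A) * ((L:A)^k * x) = (L:A)^k * ((L : A) * x) := by
      intro x
      rw [← mul_assoc, ← pow_succ', pow_succ, mul_assoc]
    simp [mul_assoc, hc2, Units.inv_mul_cancel_left]

private lemma sig_pow_inv (σ : A → A)
    (hσmul : ∀ a b : A, σ (a * b) = σ b * σ a) (hσone : σ 1 = 1)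
    (D L : Aˣ)
    (hL : σ (L : A) = -((D : A) * (L : A) * ((D⁻¹ : Aˣ) : A))) (m : ℕ) :
    σ (((L ^ m)⁻¹ : Aˣ) : A)
      = ((-1 : ℤ) ^ m) • ((D : A) * (((L ^ m)⁻¹ : Aˣ) : A) * ((D⁻¹ : Aˣ) : A)) := by
  have h1 : σ (((L ^ m)⁻¹ : Aˣ) : A) * σ ((L ^ m : Aˣ) : A) = 1 := by
    have h : ((L ^ m : Aˣ) : A) * (((L ^ m)⁻¹ : Aˣ) : A) = 1 := Units.mul_inv _
    rw [← hσmul, h, hσone]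
  have h2 : σ ((L ^ m : Aˣ) : A) *
      (((-1:ℤ)^m) • ((D:A) * (((L^m)⁻¹:Aˣ):A) * ((D⁻¹:Aˣ):A))) = 1 := by
    rw [sig_pow σ hσmul hσone D L hL m, smul_mul_smul_comm]
    rw [show ((-1:ℤ)^m * (-1:ℤ)^m) = 1 by rw [← pow_add]; exact Even.neg_one_pow ⟨m, rfl⟩]
    rw [one_smul]
    simp only [mul_assoc, Units.mul_inv_cancel_left, Units.inv_mul_cancel_left, Units.mul_inv]
  exact left_inv_eq_right_inv h1 h2

private lemma comm_pow (L : Aˣ) (M : A) (hLM : (L:A) * M - M * (L:A) = 1) :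
    ∀ m : ℕ, ((L ^ m : Aˣ) : A) * M
      = M * ((L ^ m : Aˣ) : A) + (m : A) * (((L⁻¹ : Aˣ):A) * ((L ^ m : Aˣ):A)) := by
  have hLM' : (L:A) * M = 1 + M * (L:A) := by rw [← hLM]; noncomm_ring
  intro m
  induction m with
  | zero => simp
  | succ k ih =>
    have hv : ((L ^ (k+1) : Aˣ) : A) = (L : A) * ((L ^ k : Aˣ) : A) := by
      rw [pow_succ', Units.val_mul]
    rw [hv, mul_assoc, ih, mul_add, ← mul_assoc (L:A) M, hLM',
      ((Nat.cast_commute k ((L:A))).left_comm _).symm,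
      Units.mul_inv_cancel_left, Units.inv_mul_cancel_left]
    push_cast
    noncomm_ring

private lemma key (σ : A → A)
    (hσmul : ∀ a b : A, σ (a * b) = σ b * σ a) (hσone : σ 1 = 1)
    (hσsmul : ∀ (q : ℚ) (a : A), σ (q • a) = q • σ a)
    (D L : Aˣ) (M : A)
    (hL : σ (L : A) = -((D : A) * (L : A) * ((D⁻¹ : Aˣ) : A)))
    (hM : σ M = (D : A) * ((L⁻¹ : Aˣ) : A) * M * (L : A) * ((D⁻¹ : Aˣ) : A))
    (hLM : (L : A) * M - M * (L : A) = 1)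
    (n : ℕ) (hn : 1 ≤ n) :
    σ ((L ^ (2 * n) : Aˣ) : A) * σ (((1 : ℚ) / (2 * n)) • (M * ((L ^ (1 - 2 * (n : ℤ)) : Aˣ) : A)))
      = -((D : A) * (((L ^ (2 * n) : Aˣ) : A) *
          (((1 : ℚ) / (2 * n)) • (M * ((L ^ (1 - 2 * (n : ℤ)) : Aˣ) : A)))) * ((D⁻¹ : Aˣ) : A)) + 1 := by
  have hPu : (L ^ (1 - 2 * (n : ℤ)) : Aˣ) = (L ^ (2 * n - 1))⁻¹ := by
    have h : (1 - 2 * (n : ℤ)) = -((2 * n - 1 : ℕ) : ℤ) := by omega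
    rw [h, zpow_neg, zpow_natCast]
  have hσL2n : σ ((L ^ (2 * n) : Aˣ) : A)
      = (D : A) * ((L ^ (2 * n) : Aˣ) : A) * ((D⁻¹ : Aˣ) : A) := by
    rw [sig_pow σ hσmul hσone D L hL (2 * n), Even.neg_one_pow ⟨n, by ring⟩, one_smul]
  have hσP : σ ((L ^ (1 - 2 * (n : ℤ)) : Aˣ) : A)
      = -((D : A) * ((L ^ (1 - 2 * (n : ℤ)) : Aˣ) : A) * ((D⁻¹ : Aˣ) : A)) := by
    rw [hPu, sig_pow_inv σ hσmul hσone D L hL (2 * n - 1),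
      Odd.neg_one_pow ⟨n - 1, by omega⟩, neg_one_zsmul]
  have hu1 : (L ^ (2 * n) : Aˣ) * (L ^ (1 - 2 * (n : ℤ))) = L := by
    rw [← zpow_natCast L (2 * n), ← zpow_add]
    rw [show ((2 * n : ℕ) : ℤ) + (1 - 2 * (n : ℤ)) = 1 by push_cast; ring, zpow_one]
  have hc0 : ((L ^ (2 * n) : Aˣ) : A) * ((L ^ (1 - 2 * (n : ℤ)) : Aˣ) : A) = (L : A) := by
    rw [← Units.val_mul, hu1]
  have hc : ∀ z : A, ((L ^ (2 * n) : Aˣ) : A) * (((L ^ (1 - 2 * (n : ℤ)) : Aˣ) : A) *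
      (((L⁻¹ : Aˣ) : A) * z)) = z := by
    intro z
    rw [← mul_assoc, hc0, ← mul_assoc, ← Units.val_mul, mul_inv_cancel, Units.val_one, one_mul]
  have hexp : ((L ^ (2 * n) : Aˣ) : A) * (M * ((L ^ (1 - 2 * (n : ℤ)) : Aˣ) : A))
      = M * (L : A) + ((2 * n : ℕ) : A) := by
    calc ((L ^ (2 * n) : Aˣ) : A) * (M * ((L ^ (1 - 2 * (n : ℤ)) : Aˣ) : A))
        = (((L ^ (2 * n) : Aˣ) : A) * M) * ((L ^ (1 - 2 * (n : ℤ)) : Aˣ) : A) := by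
          rw [mul_assoc]
      _ = (M * ((L ^ (2 * n) : Aˣ) : A) + ((2 * n : ℕ) : A) *
            (((L⁻¹ : Aˣ) : A) * ((L ^ (2 * n) : Aˣ) : A))) *
            ((L ^ (1 - 2 * (n : ℤ)) : Aˣ) : A) := by rw [comm_pow L M hLM]
      _ = M * (((L ^ (2 * n) : Aˣ) : A) * ((L ^ (1 - 2 * (n : ℤ)) : Aˣ) : A))
            + ((2 * n : ℕ) : A) * (((L⁻¹ : Aˣ) : A) *
              (((L ^ (2 * n) : Aˣ) : A) * ((L ^ (1 - 2 * (n : ℤ)) : Aˣ) : A))) := by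
          noncomm_ring
      _ = M * (L : A) + ((2 * n : ℕ) : A) * (((L⁻¹ : Aˣ) : A) * (L : A)) := by rw [hc0]
      _ = M * (L : A) + ((2 * n : ℕ) : A) := by rw [Units.inv_mul, mul_one]
  have hq : ((1 : ℚ) / (2 * n)) • (((2 * n : ℕ) : A)) = 1 := by
    have hne : ((2 * n : ℕ) : ℚ) ≠ 0 := Nat.cast_ne_zero.mpr (by omega)
    rw [show ((2 * n : ℕ) : A) = algebraMap ℚ A ((2 * n : ℕ) : ℚ) from (map_natCast _ _).symm,
      Algebra.algebraMap_eq_smul_one, smul_smul]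
    rw [show ((1 : ℚ) / (2 * n)) * ((2 * n : ℕ) : ℚ) = 1 by push_cast at hne ⊢; field_simp]
    exact one_smul _ _
  -- LHS
  rw [hσsmul, hσmul, mul_smul_comm, hσL2n, hσP, hM]
  -- RHS
  rw [mul_smul_comm, mul_smul_comm, smul_mul_assoc, hexp]
  rw [show (D : A) * (M * (L : A) + ((2 * n : ℕ) : A)) * ((D⁻¹ : Aˣ) : A)
      = (D : A) * (M * (L : A)) * ((D⁻¹ : Aˣ) : A) + ((2 * n : ℕ) : A) from by
    rw [mul_add, add_mul, ← (Nat.cast_commute (2 * n) ((D : A))).eq]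
    simp [mul_assoc]]
  rw [smul_add, hq, neg_add, add_assoc, neg_add_cancel, add_zero, ← smul_neg]
  congr 1
  simp only [mul_assoc, mul_neg, neg_mul, neg_inj, Units.inv_mul_cancel_left, hc]

end DtypeAux

/-- D-type B-condition for the difference of Orlov–Schulman operators (Lemma 5.2):
with `ℒ = L^{2n} = L̂²`, `𝓜 = (1/(2n)) M L^{1−2n}` and `𝓜̂ = −(1/2) M̂ L̂^{−3}`, one has
`ℒ* (𝓜 − 𝓜̂)* = −D ℒ (𝓜 − 𝓜̂) D⁻¹`. -/
theorem Dtype_OrlovSchulman_difference {A : Type*} [Ring A] [Algebra ℚ A]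
    (σ : A → A) (hσadd : ∀ a b : A, σ (a + b) = σ a + σ b)
    (hσmul : ∀ a b : A, σ (a * b) = σ b * σ a) (hσone : σ 1 = 1)
    (hσsmul : ∀ (q : ℚ) (a : A), σ (q • a) = q • σ a)
    (hσbij : Function.Bijective σ)
    (D L Lh : Aˣ) (M Mh : A)
    (hL : σ (L : A) = -((D : A) * (L : A) * (D⁻¹ : Aˣ)))
    (hLh : σ (Lh : A) = -((D : A) * (Lh : A) * (D⁻¹ : Aˣ)))
    (hM : σ M = (D : A) * (L⁻¹ : Aˣ) * M * (L : A) * (D⁻¹ : Aˣ))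
    (hMh : σ Mh = (D : A) * (Lh : A) * Mh * (Lh⁻¹ : Aˣ) * (D⁻¹ : Aˣ))
    (hLM : (L : A) * M - M * (L : A) = 1)
    (hLhMh : ((Lh⁻¹ : Aˣ) : A) * Mh - Mh * ((Lh⁻¹ : Aˣ) : A) = 1)
    (n : ℕ) (hn : 1 ≤ n)
    (hred : L ^ (2 * n) = Lh ^ 2) :
    σ ((L ^ (2 * n) : Aˣ) : A) *
        σ (((1 : ℚ) / (2 * n)) • (M * ((L ^ (1 - 2 * (n : ℤ)) : Aˣ) : A)) -
            (-((1 : ℚ) / 2) • (Mh * ((Lh ^ (-3 : ℤ) : Aˣ) : A)))) =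
      -((D : A) *
          (((L ^ (2 * n) : Aˣ) : A) *
            (((1 : ℚ) / (2 * n)) • (M * ((L ^ (1 - 2 * (n : ℤ)) : Aˣ) : A)) -
              (-((1 : ℚ) / 2) • (Mh * ((Lh ^ (-3 : ℤ) : Aˣ) : A))))) *
          (D⁻¹ : Aˣ)) := by
  have hσneg : ∀ x : A, σ (-x) = -(σ x) := by
    intro x
    have h := hσsmul (-1) x
    simpa using h
  set M' : A := -(Mh * ((Lh ^ (-2 : ℤ) : Aˣ) : A)) with hM'def
  have hP2def : (Lh ^ (-2 : ℤ) : Aˣ) = (Lh ^ 2)⁻¹ := by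
    rw [show (-2 : ℤ) = -((2 : ℕ) : ℤ) by norm_num, zpow_neg, zpow_natCast]
  have hP2 : σ ((Lh ^ (-2 : ℤ) : Aˣ) : A)
      = (D : A) * ((Lh ^ (-2 : ℤ) : Aˣ) : A) * ((D⁻¹ : Aˣ) : A) := by
    rw [hP2def, sig_pow_inv σ hσmul hσone D Lh hLh 2]
    norm_num
  have hu2 : ∀ z : A, ((Lh ^ (-2 : ℤ) : Aˣ) : A) * ((Lh : A) * z) = ((Lh⁻¹ : Aˣ) : A) * z := by
    intro z
    rw [← mul_assoc, ← Units.val_mul, show (Lh ^ (-2 : ℤ)) * Lh = Lh⁻¹ by group]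
  have hMh' : σ M' = (D : A) * ((Lh⁻¹ : Aˣ) : A) * M' * (Lh : A) * ((D⁻¹ : Aˣ) : A) := by
    rw [hM'def, hσneg, hσmul, hP2, hMh]
    simp only [mul_assoc, mul_neg, neg_mul, neg_inj, Units.inv_mul_cancel_left, hu2]
  have hll : ((Lh⁻¹ : Aˣ) : A) * ((Lh⁻¹ : Aˣ) : A) = ((Lh ^ (-2 : ℤ) : Aˣ) : A) := by
    rw [← Units.val_mul, show Lh⁻¹ * Lh⁻¹ = Lh ^ (-2 : ℤ) by group]
  have step1 : Mh - (Lh : A) * Mh * ((Lh⁻¹ : Aˣ) : A) = (Lh : A) := by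
    have h := congrArg (fun x => (Lh : A) * x) hLhMh
    simp only [mul_sub, mul_one, ← mul_assoc] at h
    rw [Units.mul_inv, one_mul] at h
    exact h
  have step2 : (Lh : A) * Mh * ((Lh ^ (-2 : ℤ) : Aˣ) : A) = Mh * ((Lh⁻¹ : Aˣ) : A) - 1 := by
    have h := congrArg (fun x => x * ((Lh⁻¹ : Aˣ) : A)) step1
    simp only [sub_mul, Units.mul_inv] at h
    rw [mul_assoc ((Lh : A) * Mh), hll] at h
    rw [← h]
    abel
  have hLM'h : (Lh : A) * M' - M' * (Lh : A) = 1 := by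
    have hu2' : ((Lh ^ (-2 : ℤ) : Aˣ) : A) * (Lh : A) = ((Lh⁻¹ : Aˣ) : A) := by
      rw [← Units.val_mul, show (Lh ^ (-2 : ℤ)) * Lh = Lh⁻¹ by group]
    rw [hM'def, mul_neg, neg_mul, ← mul_assoc (Lh : A), step2, mul_assoc Mh, hu2']
    noncomm_ring
  have keyH := key σ hσmul hσone hσsmul D Lh M' hLh hMh' hLM'h 1 le_rfl
  have keyL := key σ hσmul hσone hσsmul D L M hL hM hLM n hn
  have hYeq : ((1 : ℚ) / (2 * ((1 : ℕ) : ℚ))) • (M' * ((Lh ^ (1 - 2 * ((1 : ℕ) : ℤ)) : Aˣ) : A))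
      = -((1 : ℚ) / 2) • (Mh * ((Lh ^ (-3 : ℤ) : Aˣ) : A)) := by
    rw [show (Lh ^ (1 - 2 * ((1 : ℕ) : ℤ)) : Aˣ) = Lh ^ (-1 : ℤ) by norm_num,
      hM'def, neg_mul, mul_assoc, ← Units.val_mul, ← zpow_add,
      show (-2 : ℤ) + (-1 : ℤ) = -3 by norm_num, smul_neg, ← neg_smul]
    norm_num
  rw [show Lh ^ (2 * 1) = Lh ^ 2 by norm_num, ← hred, hYeq] at keyH
  rw [sig_sub σ hσadd hσsmul, mul_sub, keyL, keyH, mul_sub ((L ^ (2 * n) : Aˣ) : A),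
    mul_sub (D : A), sub_mul]
  abel
end
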